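/- Let k be a field, e ≥ 2, d ≥ 1, and let a^{(1)}, …, a^{(e)} ∈ k^d be vectors such that for every m ∈ {1, …, d} the vector (a^{(1)}_m, …, a^{(e)}_m) ∈ k^e is nonzero. For each i set A_i := a^{(i)}(a^{(i)})ᵗ − diag(a^{(i)}), where a^{(i)}(a^{(i)})ᵗ is the rank-≤1 symmetric matrix with entries a^{(i)}_s a^{(i)}_t and diag(a^{(i)}) is the diagonal matrix with diagonal entries a^{(i)}_1, …, a^{(i)}_d. Then κ_{e−2}(A_1, …, A_e) ≤ (e−1)·d + C(e, 2), and consequently (by the symmetry of the κ-vector for tuples of symmetric matrices) also κ_1(A_1, …, A_e) ≤ (e−1)·d + C(e, 2). -/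
import Mathlib


open Matrix

/-- The matrix of the map `ψ_j(A) : k^d ⊗ Λ^j(k^e) → k^d ⊗ Λ^{j+1}(k^e)` determined by
`ψ_j(A)(u ⊗ E) = Σ_i (A_i u) ⊗ (E ∧ e_i)`, written in the standard bases: basis vectors of
`k^d ⊗ Λ^j(k^e)` are indexed by pairs `(p, S)` with `p : Fin d` and `S` a `j`-element subset
of `Fin e`, and `e_S ∧ e_i = (-1)^{#{s ∈ S | i < s}} e_{insert i S}` if `i ∉ S`, else `0`. -/
noncomputable def psiMatrix {R : Type*} [CommRing R] (d e : ℕ)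
    (A : Fin e → Matrix (Fin d) (Fin d) R) (j : ℕ) :
    Matrix (Fin d × {T : Finset (Fin e) // T.card = j + 1})
      (Fin d × {S : Finset (Fin e) // S.card = j}) R :=
  Matrix.of fun qT pS =>
    ∑ i : Fin e,
      if i ∉ pS.2.1 ∧ qT.2.1 = insert i pS.2.1 then
        (-1 : R) ^ (pS.2.1.filter (fun s => i < s)).card * A i qT.1 pS.1
      else 0

/-- `κ_j(A)` is the rank of `ψ_j(A)`. -/
noncomputable def kappa {R : Type*} [CommRing R] (d e : ℕ)
    (A : Fin e → Matrix (Fin d) (Fin d) R) (j : ℕ) : ℕ :=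
  (psiMatrix d e A j).rank

section Helpers

open Finset

variable {e j : ℕ} {M : Type*} [AddCommMonoid M]

lemma sum_pick_erase (T : Finset (Fin e)) (hT : T.card = j + 1) (i : Fin e)
    (f : {S : Finset (Fin e) // S.card = j} → M) :
    (∑ S : {S : Finset (Fin e) // S.card = j},
      if i ∉ S.1 ∧ T = insert i S.1 then f S else 0) =
    if hi : i ∈ T then
      f ⟨T.erase i, by rw [Finset.card_erase_of_mem hi, hT, Nat.add_sub_cancel]⟩ else 0 := by
  split_ifs with hi
  · rw [Finset.sum_eq_single_of_mem
      ⟨T.erase i, by rw [Finset.card_erase_of_mem hi, hT, Nat.add_sub_cancel]⟩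
      (Finset.mem_univ _)]
    · rw [if_pos ⟨Finset.notMem_erase i T, (Finset.insert_erase hi).symm⟩]
    · rintro ⟨S, hS⟩ - hne
      rw [if_neg]
      rintro ⟨hiS, hTS⟩
      have hiS' : i ∉ S := hiS
      have hTS' : T = insert i S := hTS
      have : S = T.erase i := by rw [hTS', Finset.erase_insert hiS']
      exact hne (Subtype.ext this)
  · apply Finset.sum_eq_zero
    rintro ⟨S, hS⟩ -
    rw [if_neg]
    rintro ⟨-, hTS⟩
    have hTS' : T = insert i S := hTS
    exact hi (hTS' ▸ Finset.mem_insert_self i S)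

lemma sum_pick_insert (S : Finset (Fin e)) (hS : S.card = j) (i : Fin e) (hi : i ∉ S)
    (f : {T : Finset (Fin e) // T.card = j + 1} → M) :
    (∑ T : {T : Finset (Fin e) // T.card = j + 1},
      if i ∉ S ∧ T.1 = insert i S then f T else 0) =
    f ⟨insert i S, by rw [Finset.card_insert_of_notMem hi, hS]⟩ := by
  rw [Finset.sum_eq_single_of_mem
    ⟨insert i S, by rw [Finset.card_insert_of_notMem hi, hS]⟩ (Finset.mem_univ _)]
  · rw [if_pos ⟨hi, rfl⟩]
  · rintro ⟨T, hT⟩ - hne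
    rw [if_neg]
    rintro ⟨-, hTS⟩
    exact hne (Subtype.ext hTS)

lemma sum_pick_insert' (S : Finset (Fin e)) (hS : S.card = j) (i : Fin e)
    (f : {T : Finset (Fin e) // T.card = j + 1} → M) :
    (∑ T : {T : Finset (Fin e) // T.card = j + 1},
      if i ∉ S ∧ T.1 = insert i S then f T else 0) =
    if hi : i ∉ S then
      f ⟨insert i S, by rw [Finset.card_insert_of_notMem hi, hS]⟩ else 0 := by
  by_cases hi : i ∉ S
  · rw [dif_pos hi, sum_pick_insert S hS i hi f]
  · rw [dif_neg hi]
    apply Finset.sum_eq_zero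
    rintro ⟨T, hT⟩ -
    rw [if_neg]
    rintro ⟨h, -⟩
    exact hi h

lemma sign_parity (S : Finset (Fin e)) (i₀ l₀ : Fin e) (hne : i₀ ≠ l₀)
    (hC : Sᶜ = {i₀, l₀}) :
    Odd ((S.filter (fun s => i₀ < s)).card + (l₀ : ℕ)
      + ((S.filter (fun s => l₀ < s)).card + (i₀ : ℕ))) := by
  have key : ∀ i : Fin e, (S.filter (fun s => i < s)).card
      + (({i₀, l₀} : Finset (Fin e)).filter (fun s => i < s)).card = e - 1 - (i : ℕ) := by
    intro i
    have h1 : (S.filter (fun s => i < s)).card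
        + (Sᶜ.filter (fun s => i < s)).card
        = ((univ : Finset (Fin e)).filter (fun s => i < s)).card := by
      rw [← Finset.card_union_of_disjoint
        (Finset.disjoint_filter_filter disjoint_compl_right), ← Finset.filter_union,
        Finset.union_compl]
    rw [← hC, h1, Finset.filter_lt_eq_Ioi, Fin.card_Ioi]
  have k1 := key i₀
  have k2 := key l₀
  have hi₀ : (i₀ : ℕ) < e := i₀.isLt
  have hl₀ : (l₀ : ℕ) < e := l₀.isLt
  rcases hne.lt_or_gt with h | h
  · have hv : (i₀ : ℕ) < (l₀ : ℕ) := h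
    have p1 : (({i₀, l₀} : Finset (Fin e)).filter (fun s => i₀ < s)).card = 1 := by
      simp [Finset.filter_insert, Finset.filter_singleton, h]
    have p2 : (({i₀, l₀} : Finset (Fin e)).filter (fun s => l₀ < s)).card = 0 := by
      simp [Finset.filter_insert, Finset.filter_singleton, asymm h]
    rw [p1] at k1; rw [p2] at k2
    rw [Nat.odd_iff]; omega
  · have hv : (l₀ : ℕ) < (i₀ : ℕ) := h
    have p1 : (({i₀, l₀} : Finset (Fin e)).filter (fun s => i₀ < s)).card = 0 := by
      simp [Finset.filter_insert, Finset.filter_singleton, asymm h]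
    have p2 : (({i₀, l₀} : Finset (Fin e)).filter (fun s => l₀ < s)).card = 1 := by
      simp [Finset.filter_insert, Finset.filter_singleton, h]
    rw [p1] at k1; rw [p2] at k2
    rw [Nat.odd_iff]; omega

end Helpers

section KeySums

variable {k : Type*} [Field k] {d : ℕ}

lemma neg_one_pow_add_eq_zero {x y : ℕ} (h : Odd (x + y)) : (-1 : k) ^ x + (-1 : k) ^ y = 0 := by
  rcases Nat.even_or_odd x with hx | hx
  · have hy : Odd y := by
      rw [Nat.odd_iff] at h ⊢; rw [Nat.even_iff] at hx; omega
    rw [hx.neg_one_pow, hy.neg_one_pow]; ring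
  · have hy : Even y := by
      rw [Nat.odd_iff] at h hx; rw [Nat.even_iff]; omega
    rw [hx.neg_one_pow, hy.neg_one_pow]; ring

lemma key_sum (u w v : Fin d → k) (q : Fin d) (c₁ c₂ : k) (hc : c₁ + c₂ = 0)
    (hB : ∑ t, u t * w t * v t = 0) (hB' : ∑ t, w t * u t * v t = 0) :
    ∑ p, (c₁ * ((u q * u p - if q = p then u q else 0) * (w p * v p))
        + c₂ * ((w q * w p - if q = p then w q else 0) * (u p * v p))) = 0 := by
  have h : ∀ p, (c₁ * ((u q * u p - if q = p then u q else 0) * (w p * v p))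
        + c₂ * ((w q * w p - if q = p then w q else 0) * (u p * v p)))
      = (c₁ * u q) * (u p * w p * v p) + (c₂ * w q) * (w p * u p * v p)
        - (if q = p then c₁ * u q * (w p * v p) + c₂ * w q * (u p * v p) else 0) := by
    intro p; split_ifs <;> ring
  simp only [h]
  rw [Finset.sum_sub_distrib, Finset.sum_add_distrib, ← Finset.mul_sum, ← Finset.mul_sum,
    Finset.sum_ite_eq, if_pos (Finset.mem_univ q)]
  have e1 : ∑ p, u p * w p * v p = 0 := hB
  have e2 : ∑ p, w p * u p * v p = 0 := hB'
  rw [e1, e2]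
  linear_combination (-(u q * w q * v q)) * hc

lemma key_sum2 (u w v : Fin d → k) (p : Fin d) (c₁ c₂ : k) (hc : c₁ + c₂ = 0)
    (hB : ∑ t, u t * w t * v t = 0) (hB' : ∑ t, w t * u t * v t = 0) :
    ∑ q, (c₁ * ((u q * u p - if q = p then u q else 0) * (w q * v q))
        + c₂ * ((w q * w p - if q = p then w q else 0) * (u q * v q))) = 0 := by
  have h : ∀ q, (c₁ * ((u q * u p - if q = p then u q else 0) * (w q * v q))
        + c₂ * ((w q * w p - if q = p then w q else 0) * (u q * v q)))
      = (c₁ * u p) * (u q * w q * v q) + (c₂ * w p) * (w q * u q * v q)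
        - (if q = p then c₁ * u q * (w q * v q) + c₂ * w q * (u q * v q) else 0) := by
    intro q; split_ifs with hqp
    · subst hqp; ring
    · ring
  simp only [h]
  rw [Finset.sum_sub_distrib, Finset.sum_add_distrib, ← Finset.mul_sum, ← Finset.mul_sum,
    Finset.sum_ite_eq', if_pos (Finset.mem_univ p)]
  have e1 : ∑ t, u t * w t * v t = 0 := hB
  have e2 : ∑ t, w t * u t * v t = 0 := hB'
  rw [e1, e2]
  linear_combination (-(u p * w p * v p)) * hc

end KeySums

lemma key1 {k : Type*} [Field k] (d e : ℕ) (a : Fin e → Fin d → k) (v : Fin d → k)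
    (hv : ∀ i l : Fin e, i ≠ l → ∑ t, a i t * a l t * v t = 0) :
    psiMatrix d e (fun i => Matrix.vecMulVec (a i) (a i) - Matrix.diagonal (a i)) 1 *ᵥ
      (fun pS => (∑ i ∈ pS.2.1, a i pS.1) * v pS.1) = 0 := by
  funext x
  obtain ⟨q, T, hT⟩ := x
  obtain ⟨i₀, l₀, hne, hTe⟩ := Finset.card_eq_two.mp hT
  subst hTe
  simp only [Matrix.mulVec, dotProduct, psiMatrix, Matrix.of_apply, Pi.zero_apply]
  simp only [Finset.sum_mul, ite_mul, zero_mul]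
  rw [Finset.sum_comm]
  simp only [Fintype.sum_prod_type]
  simp only [sum_pick_erase _ hT]
  rw [← Finset.sum_subset (Finset.subset_univ ({i₀, l₀} : Finset (Fin e)))
      (fun x _ hx => Finset.sum_eq_zero fun p _ => dif_neg hx)]
  rw [Finset.sum_pair hne]
  have m1 : i₀ ∈ ({i₀, l₀} : Finset (Fin e)) := Finset.mem_insert_self _ _
  have m2 : l₀ ∈ ({i₀, l₀} : Finset (Fin e)) := by simp
  have er1 : ({i₀, l₀} : Finset (Fin e)).erase i₀ = {l₀} := by
    rw [Finset.erase_insert (by simp [hne])]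
  have er2 : ({i₀, l₀} : Finset (Fin e)).erase l₀ = {i₀} := by
    rw [Finset.pair_comm, Finset.erase_insert (by simp [hne.symm])]
  simp only [dif_pos m1, dif_pos m2, er1, er2, Finset.sum_singleton]
  set c₁ : k := (-1 : k) ^ (({l₀} : Finset (Fin e)).filter (fun s => i₀ < s)).card with hc₁
  set c₂ : k := (-1 : k) ^ (({i₀} : Finset (Fin e)).filter (fun s => l₀ < s)).card with hc₂
  have hc : c₁ + c₂ = 0 := by
    rcases hne.lt_or_gt with h | h <;>
      simp [hc₁, hc₂, Finset.filter_singleton, h, asymm h]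
  rw [← Finset.sum_add_distrib]
  refine (Finset.sum_congr rfl fun p _ => ?_).trans
    (key_sum (a i₀) (a l₀) v q c₁ c₂ hc (hv i₀ l₀ hne) (hv l₀ i₀ hne.symm))
  simp only [Matrix.sub_apply, Matrix.vecMulVec_apply, Matrix.diagonal_apply]
  split_ifs <;> ring

lemma key2 {k : Type*} [Field k] (d e : ℕ) (he : 2 ≤ e) (a : Fin e → Fin d → k) (v : Fin d → k)
    (hv : ∀ i l : Fin e, i ≠ l → ∑ t, a i t * a l t * v t = 0) :
    (psiMatrix d e (fun i => Matrix.vecMulVec (a i) (a i) - Matrix.diagonal (a i)) (e - 2))ᵀ *ᵥ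
      (fun qT => (∑ i ∈ qT.2.1ᶜ, (-1 : k) ^ (i : ℕ) * a i qT.1) * v qT.1) = 0 := by
  funext x
  obtain ⟨p, S, hS⟩ := x
  have hSc : Sᶜ.card = 2 := by
    rw [Finset.card_compl, hS, Fintype.card_fin]; omega
  obtain ⟨i₀, l₀, hne, hCe⟩ := Finset.card_eq_two.mp hSc
  simp only [Matrix.mulVec, dotProduct, Matrix.transpose_apply, psiMatrix,
    Matrix.of_apply, Pi.zero_apply]
  simp only [Finset.sum_mul, ite_mul, zero_mul]
  rw [Finset.sum_comm]
  simp only [Fintype.sum_prod_type]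
  simp only [sum_pick_insert' S hS]
  rw [← Finset.sum_subset (Finset.subset_univ (Sᶜ : Finset (Fin e)))
      (fun x _ hx => Finset.sum_eq_zero fun q _ =>
        dif_neg (not_not_intro (by simpa using hx)))]
  rw [hCe, Finset.sum_pair hne]
  have hi₀ : i₀ ∉ S := by
    have : i₀ ∈ Sᶜ := by rw [hCe]; exact Finset.mem_insert_self _ _
    exact Finset.mem_compl.mp this
  have hl₀ : l₀ ∉ S := by
    have : l₀ ∈ Sᶜ := by rw [hCe]; simp
    exact Finset.mem_compl.mp this
  have ci : (insert i₀ S)ᶜ = ({l₀} : Finset (Fin e)) := by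
    rw [Finset.compl_insert, hCe, Finset.erase_insert (by simp [hne])]
  have cl : (insert l₀ S)ᶜ = ({i₀} : Finset (Fin e)) := by
    rw [Finset.compl_insert, hCe, Finset.pair_comm, Finset.erase_insert (by simp [hne.symm])]
  simp only [dif_pos hi₀, dif_pos hl₀, ci, cl, Finset.sum_singleton]
  set c₁ : k := (-1 : k) ^ (S.filter (fun s => i₀ < s)).card * (-1 : k) ^ (l₀ : ℕ) with hc₁
  set c₂ : k := (-1 : k) ^ (S.filter (fun s => l₀ < s)).card * (-1 : k) ^ (i₀ : ℕ) with hc₂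
  have hc : c₁ + c₂ = 0 := by
    rw [hc₁, hc₂, ← pow_add, ← pow_add]
    exact neg_one_pow_add_eq_zero (sign_parity S i₀ l₀ hne hCe)
  rw [← Finset.sum_add_distrib]
  refine (Finset.sum_congr rfl fun q _ => ?_).trans
    (key_sum2 (a i₀) (a l₀) v p c₁ c₂ hc (hv i₀ l₀ hne) (hv l₀ i₀ hne.symm))
  simp only [Matrix.sub_apply, Matrix.vecMulVec_apply, Matrix.diagonal_apply]
  split_ifs <;> ring

lemma rank_add_finrank_le {K : Type*} [Field K] {m n : Type*} [Fintype m] [Fintype n]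
    (M : Matrix m n K) (W : Submodule K (n → K)) (hW : W ≤ LinearMap.ker M.mulVecLin) :
    M.rank + Module.finrank K W ≤ Fintype.card n := by
  have h := LinearMap.finrank_range_add_finrank_ker M.mulVecLin
  rw [Module.finrank_pi] at h
  have h2 : Module.finrank K W ≤ Module.finrank K (LinearMap.ker M.mulVecLin) :=
    Submodule.finrank_mono hW
  have h3 : M.rank = Module.finrank K (LinearMap.range M.mulVecLin) := rfl
  omega

/-- for matrices `A_i = a^{(i)} (a^{(i)})ᵗ - diag(a^{(i)})` with the vectors
`(a^{(1)}_m, …, a^{(e)}_m)` nonzero for each `m`, one has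
`κ_{e-2}(A) ≤ (e-1)·d + C(e,2)` and (by symmetry of the κ-vector) also
`κ_1(A) ≤ (e-1)·d + C(e,2)`. -/
theorem kappa_smoothable_bound {k : Type*} [Field k] (d e : ℕ) (hd : 1 ≤ d) (he : 2 ≤ e)
    (a : Fin e → Fin d → k) (ha : ∀ m : Fin d, ∃ i : Fin e, a i m ≠ 0) :
    kappa d e (fun i => Matrix.vecMulVec (a i) (a i) - Matrix.diagonal (a i)) (e - 2) ≤
      (e - 1) * d + Nat.choose e 2 ∧
    kappa d e (fun i => Matrix.vecMulVec (a i) (a i) - Matrix.diagonal (a i)) 1 ≤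
      (e - 1) * d + Nat.choose e 2 := by
  classical
  have hmul : d * e = (e - 1) * d + d := by
    obtain ⟨e', rfl⟩ : ∃ e', e = e' + 1 := ⟨e - 1, by omega⟩
    simp [Nat.add_sub_cancel, Nat.succ_mul, Nat.mul_comm, Nat.mul_add]
  set Φ : (Fin d → k) →ₗ[k] ({P : Finset (Fin e) // P.card = 2} → k) :=
    { toFun := fun v P => ∑ t, (∏ i ∈ P.1, a i t) * v t
      map_add' := fun v w => by
        funext P; simp [mul_add, Finset.sum_add_distrib]
      map_smul' := fun c v => by
        funext P
        simp only [RingHom.id_apply, Pi.smul_apply, smul_eq_mul, Finset.mul_sum]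
        exact Finset.sum_congr rfl fun t _ => by ring } with hΦ
  have hker : ∀ v ∈ LinearMap.ker Φ, ∀ i l : Fin e, i ≠ l →
      ∑ t, a i t * a l t * v t = 0 := by
    intro v hv i l hne
    have h0 := congrFun (LinearMap.mem_ker.mp hv)
      ⟨({i, l} : Finset (Fin e)), Finset.card_pair hne⟩
    simp only [hΦ, LinearMap.coe_mk, AddHom.coe_mk, Pi.zero_apply] at h0
    rw [← h0]
    exact Finset.sum_congr rfl fun t _ => by rw [Finset.prod_pair hne]
  have hdim : d ≤ Module.finrank k (LinearMap.ker Φ) + e.choose 2 := by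
    have h := LinearMap.finrank_range_add_finrank_ker Φ
    rw [Module.finrank_pi, Fintype.card_fin] at h
    have h2 : Module.finrank k (LinearMap.range Φ) ≤ e.choose 2 := by
      have h4 := Submodule.finrank_le (LinearMap.range Φ)
      rwa [Module.finrank_pi, Fintype.card_finset_len, Fintype.card_fin] at h4
    omega
  constructor
  · -- κ_{e-2}
    set ι : (Fin d → k) →ₗ[k] (Fin d × {T : Finset (Fin e) // T.card = (e - 2) + 1} → k) :=
      { toFun := fun v qT => (∑ i ∈ qT.2.1ᶜ, (-1 : k) ^ (i : ℕ) * a i qT.1) * v qT.1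
        map_add' := fun v w => by funext qT; simp [mul_add]
        map_smul' := fun c v => by
          funext qT
          simp only [RingHom.id_apply, Pi.smul_apply, smul_eq_mul]
          ring } with hι
    have hinj : Function.Injective ι := by
      rw [← LinearMap.ker_eq_bot, Submodule.eq_bot_iff]
      intro v hv
      funext m
      obtain ⟨i, hi⟩ := ha m
      have hT : (({i} : Finset (Fin e))ᶜ).card = (e - 2) + 1 := by
        rw [Finset.card_compl, Finset.card_singleton, Fintype.card_fin]; omega
      have h0 := congrFun hv (m, ⟨({i} : Finset (Fin e))ᶜ, hT⟩)
      simp only [hι, LinearMap.coe_mk, AddHom.coe_mk, Pi.zero_apply, compl_compl,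
        Finset.sum_singleton] at h0
      have hne : (-1 : k) ^ (i : ℕ) * a i m ≠ 0 :=
        mul_ne_zero (pow_ne_zero _ (neg_ne_zero.mpr one_ne_zero)) hi
      exact (mul_eq_zero.mp h0).resolve_left hne
    have hsub : Submodule.map ι (LinearMap.ker Φ) ≤
        LinearMap.ker ((psiMatrix d e
          (fun i => Matrix.vecMulVec (a i) (a i) - Matrix.diagonal (a i)) (e - 2))ᵀ).mulVecLin := by
      rintro x hx
      obtain ⟨v, hv, rfl⟩ := hx
      rw [LinearMap.mem_ker, Matrix.mulVecLin_apply]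
      exact key2 d e he a v (hker v hv)
    have hrk := rank_add_finrank_le _ _ hsub
    rw [← LinearEquiv.finrank_eq (Submodule.equivMapOfInjective ι hinj (LinearMap.ker Φ))]
      at hrk
    have hcard : Fintype.card (Fin d × {T : Finset (Fin e) // T.card = (e - 2) + 1})
        = d * e := by
      rw [Fintype.card_prod, Fintype.card_fin, Fintype.card_finset_len, Fintype.card_fin]
      have h1 : (e - 2) + 1 = e - 1 := by omega
      rw [h1, Nat.choose_symm (by omega : 1 ≤ e), Nat.choose_one_right]
    rw [hcard] at hrk
    have hre : kappa d e (fun i => Matrix.vecMulVec (a i) (a i) - Matrix.diagonal (a i)) (e - 2)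
        = ((psiMatrix d e
            (fun i => Matrix.vecMulVec (a i) (a i) - Matrix.diagonal (a i)) (e - 2))ᵀ).rank :=
      (Matrix.rank_transpose _).symm
    rw [hre]
    linarith
  · -- κ_1
    set ι : (Fin d → k) →ₗ[k] (Fin d × {S : Finset (Fin e) // S.card = 1} → k) :=
      { toFun := fun v pS => (∑ i ∈ pS.2.1, a i pS.1) * v pS.1
        map_add' := fun v w => by funext pS; simp [mul_add]
        map_smul' := fun c v => by
          funext pS
          simp only [RingHom.id_apply, Pi.smul_apply, smul_eq_mul]
          ring } with hι
    have hinj : Function.Injective ι := by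
      rw [← LinearMap.ker_eq_bot, Submodule.eq_bot_iff]
      intro v hv
      funext m
      obtain ⟨i, hi⟩ := ha m
      have h0 := congrFun hv (m, ⟨({i} : Finset (Fin e)), Finset.card_singleton i⟩)
      simp only [hι, LinearMap.coe_mk, AddHom.coe_mk, Pi.zero_apply,
        Finset.sum_singleton] at h0
      exact (mul_eq_zero.mp h0).resolve_left hi
    have hsub : Submodule.map ι (LinearMap.ker Φ) ≤
        LinearMap.ker ((psiMatrix d e
          (fun i => Matrix.vecMulVec (a i) (a i) - Matrix.diagonal (a i)) 1)).mulVecLin := by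
      rintro x hx
      obtain ⟨v, hv, rfl⟩ := hx
      rw [LinearMap.mem_ker, Matrix.mulVecLin_apply]
      exact key1 d e a v (hker v hv)
    have hrk := rank_add_finrank_le _ _ hsub
    rw [← LinearEquiv.finrank_eq (Submodule.equivMapOfInjective ι hinj (LinearMap.ker Φ))]
      at hrk
    have hcard : Fintype.card (Fin d × {S : Finset (Fin e) // S.card = 1}) = d * e := by
      rw [Fintype.card_prod, Fintype.card_fin, Fintype.card_finset_len, Fintype.card_fin,
        Nat.choose_one_right]
    rw [hcard] at hrk
    have hre : kappa d e (fun i => Matrix.vecMulVec (a i) (a i) - Matrix.diagonal (a i)) 1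
        = ((psiMatrix d e
            (fun i => Matrix.vecMulVec (a i) (a i) - Matrix.diagonal (a i)) 1)).rank := rfl
    rw [hre]
    linarith
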